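/- arXiv:2006.07302 — 7 statements merged into one kernel-verified Lean document; each statement's English description precedes it below -/
import Mathlib

section
/- If G is a graph on at least 2 vertices and G[V(G)\S] has treedepth at most 1 for a minimal separator S (i.e., the complement of S induces an independent set), then S equals the open neighborhood N(v) of some vertex v. -/
namespace PACE

open SimpleGraph

variable {V : Type*}

/-- Reachability within the induced subgraph `G[A]`. -/
def ReachIn (G : SimpleGraph V) (A : Set V) (a b : V) : Prop :=
  ∃ (ha : a ∈ A) (hb : b ∈ A), (G.induce A).Reachable ⟨a, ha⟩ ⟨b, hb⟩

/-- `S` is an `a,b`-separator of the induced subgraph `G[Y]`. -/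
def IsSepIn (G : SimpleGraph V) (Y S : Set V) (a b : V) : Prop :=
  S ⊆ Y ∧ a ∈ Y \ S ∧ b ∈ Y \ S ∧ ¬ ReachIn G (Y \ S) a b

/-- `S` is a minimal `a,b`-separator of `G[Y]`. -/
def IsMinSepIn (G : SimpleGraph V) (Y S : Set V) (a b : V) : Prop :=
  IsSepIn G Y S a b ∧ ∀ S' ⊂ S, ¬ IsSepIn G Y S' a b

/-- `S` is a minimal separator of `G`. -/
def IsMinSep (G : SimpleGraph V) (S : Set V) : Prop :=
  ∃ a b, IsMinSepIn G Set.univ S a b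

/-- `C` is (the vertex set of) a connected component of `G[A]`. -/
def IsCompOf (G : SimpleGraph V) (A C : Set V) : Prop :=
  C ⊆ A ∧ C.Nonempty ∧ (G.induce C).Connected ∧
    ∀ u ∈ C, ∀ v ∈ A \ C, ¬ G.Adj u v

/-- The open neighborhood of a vertex set. -/
def nbhdSet (G : SimpleGraph V) (C : Set V) : Set V :=
  {v | v ∉ C ∧ ∃ u ∈ C, G.Adj u v}

/-- A treedepth decomposition (elimination forest) of `G`, given by its
ancestor relation: a partial order in which the set of ancestors of any vertex
is a chain, and every edge of `G` joins an ancestor-descendant pair. -/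
structure TDForest (G : SimpleGraph V) where
  anc : V → V → Prop
  refl : ∀ v, anc v v
  antisymm : ∀ u v, anc u v → anc v u → u = v
  trans : ∀ u v w, anc u v → anc v w → anc u w
  ancChain : ∀ u w v, anc u v → anc w v → anc u w ∨ anc w u
  adjComparable : ∀ u v, G.Adj u v → anc u v ∨ anc v u

/-- Depth of an elimination forest: the maximum number of vertices on a
root-to-vertex path. -/
noncomputable def TDForest.depth {G : SimpleGraph V} (F : TDForest G) : ℕ :=
  ⨆ v, Set.ncard {u | F.anc u v}

/-- Treedepth: the minimum depth of an elimination forest. -/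
noncomputable def treedepth (G : SimpleGraph V) : ℕ :=
  sInf {k | ∃ F : TDForest G, F.depth ≤ k}



lemma exists_forest (G : SimpleGraph V) : Nonempty (TDForest G) := by
  classical
  refine ⟨⟨fun u v => WellOrderingRel u v ∨ u = v, fun v => Or.inr rfl, ?_, ?_, ?_, ?_⟩⟩
  · rintro u v (h1 | rfl) (h2 | h2)
    · exact absurd (_root_.trans h1 h2) (irrefl u)
    · exact h2.symm
    · rfl
    · rfl
  · rintro u v w (h1 | rfl) (h2 | rfl)
    · exact Or.inl (_root_.trans h1 h2)
    · exact Or.inl h1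
    · exact Or.inl h2
    · exact Or.inr rfl
  · intro u w v _ _
    rcases trichotomous_of WellOrderingRel u w with h | h | h
    · exact Or.inl (Or.inl h)
    · exact Or.inl (Or.inr h)
    · exact Or.inr (Or.inl h)
  · intro u v _
    rcases trichotomous_of WellOrderingRel u v with h | h | h
    · exact Or.inl (Or.inl h)
    · exact Or.inl (Or.inr h)
    · exact Or.inr (Or.inl h)

lemma depth_ge {G : SimpleGraph V} [Finite V] (F : TDForest G) {u v : V}
    (h : G.Adj u v) : 2 ≤ F.depth := by
  have key : ∀ x y : V, x ≠ y → F.anc x y → 2 ≤ F.depth := by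
    intro x y hne hxy
    have hsub : ({x, y} : Set V) ⊆ {u | F.anc u y} := by
      intro z hz
      simp only [Set.mem_insert_iff, Set.mem_singleton_iff] at hz
      rcases hz with h | h <;> rw [h]
      · exact hxy
      · exact F.refl y
    have h2 : 2 ≤ Set.ncard {u | F.anc u y} := by
      rw [← Set.ncard_pair hne]
      exact Set.ncard_le_ncard hsub (Set.toFinite _)
    refine h2.trans ?_
    exact le_ciSup (f := fun w => Set.ncard {u | F.anc u w})
      (Set.Finite.bddAbove (Set.finite_range _)) y
  rcases F.adjComparable u v h with hc | hc
  · exact key u v h.ne hc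
  · exact key v u h.ne.symm hc

/-- If treedepth ≤ 1 then the graph is edgeless. -/
lemma edgeless_of_td_le_one {W : Type*} [Finite W] (H : SimpleGraph W)
    (htd : treedepth H ≤ 1) : ∀ u v : W, ¬ H.Adj u v := by
  intro u v hadj
  obtain ⟨F0⟩ := exists_forest H
  have hne : (treedepth H) ∈ {k | ∃ F : TDForest H, F.depth ≤ k} :=
    Nat.sInf_mem ⟨F0.depth, F0, le_refl _⟩
  obtain ⟨F, hF⟩ := hne
  have := depth_ge F hadj
  omega

/-- First step of a walk. -/
lemma first_step {A : Set V} {G : SimpleGraph V} {a b : ↥A}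
    (w : (G.induce A).Walk a b) (hne : a ≠ b) : ∃ x : ↥A, G.Adj ↑a ↑x := by
  cases w with
  | nil => exact absurd rfl hne
  | cons h p => exact ⟨_, h⟩

theorem stmt0 {V : Type*} [Fintype V] (G : SimpleGraph V)
    (hV : 2 ≤ Fintype.card V) (S : Set V) (hS : IsMinSep G S)
    (htd : treedepth (G.induce (Sᶜ : Set V)) ≤ 1) :
    ∃ v : V, S = G.neighborSet v := by
  classical
  obtain ⟨a, b, ⟨⟨hSuniv, ⟨-, haS⟩, ⟨-, hbS⟩, hnab⟩, hmin⟩⟩ := hS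
  have hind : ∀ u v : V, u ∉ S → v ∉ S → ¬ G.Adj u v := by
    intro u v hu hv hadj
    exact edgeless_of_td_le_one (G.induce (Sᶜ : Set V)) htd ⟨u, hu⟩ ⟨v, hv⟩ hadj
  have hab : a ≠ b := by
    rintro rfl
    exact hnab ⟨⟨trivial, haS⟩, ⟨trivial, haS⟩, Reachable.refl _⟩
  refine ⟨a, ?_⟩
  ext s
  simp only [mem_neighborSet]
  constructor
  · intro hsS
    have hsub : S \ {s} ⊂ S := Set.sdiff_singleton_ssubset.mpr hsS
    have hnotsep := hmin _ hsub
    have haS' : a ∉ S \ {s} := fun h => haS h.1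
    have hbS' : b ∉ S \ {s} := fun h => hbS h.1
    have hreach : ReachIn G (Set.univ \ (S \ {s})) a b := by
      by_contra h
      exact hnotsep ⟨fun x hx => trivial, ⟨trivial, haS'⟩, ⟨trivial, hbS'⟩, h⟩
    obtain ⟨ha', hb', hr⟩ := hreach
    obtain ⟨w⟩ := hr
    have hne : (⟨a, ha'⟩ : ↥(Set.univ \ (S \ {s}))) ≠ ⟨b, hb'⟩ := by
      simp only [ne_eq, Subtype.mk.injEq]
      exact hab
    obtain ⟨x, hax⟩ := first_step w hne
    have hxS : (x : V) ∈ S := by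
      by_contra hxS
      exact hind a x haS hxS hax
    have hxs : (x : V) = s := by
      have := x.2
      rcases this with ⟨-, hx2⟩
      by_contra hne'
      exact hx2 ⟨hxS, hne'⟩
    rw [← hxs]
    exact hax
  · intro hadj
    by_contra hsS
    exact hind a s haS hsS hadj

end PACE
end

section
/- Let G be a graph that is not a complete graph. Then the treedepth of G equals the minimum over all minimal separators S of G of |S| plus the maximum treedepth of G[C] over connected components C of G - S. -/
namespace PACE

open SimpleGraph

variable {V : Type*}

/-!
For any vertex set `S`, putting the vertices of `S` on a path above optimal elimination forests
of the components of `G - S` shows that `td G` is at most the value `|S| + max_C td G[C]` of `S`.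

Conversely, induct on the vertex set to find a separator (not yet minimal) of value at most
`td G`. If `G` is disconnected, `∅` works. Otherwise let `r` be the root of an optimal
elimination forest, so that `td (G - r) < td G`. If `G - r` is not complete, a separator of
`G - r` together with `r` works. If `G - r` is complete, then `td G ≥ |V|`, while all vertices
but a non-adjacent pair separate that pair with value `|V| - 1`.

Finally, shrinking a separator to a minimal one does not increase its value: removing a vertex
from `S` adds it to at most one component and raises that component's treedepth by at most one.
-/

section Forest

variable {W W' : Type*} {H : SimpleGraph W} {H' : SimpleGraph W'}

noncomputable def chainForest (H : SimpleGraph W) : TDForest H where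
  anc u v := WellOrderingRel u v ∨ u = v
  refl _ := Or.inr rfl
  antisymm u v := by
    rintro (huv | rfl) (hvu | hvu)
    exacts [absurd (_root_.trans huv hvu) (irrefl u), hvu.symm, rfl, rfl]
  trans u v w := by
    rintro (huv | rfl) (hvw | rfl)
    exacts [Or.inl (_root_.trans huv hvw), Or.inl huv, Or.inl hvw, Or.inr rfl]
  ancChain u w _ _ _ := by
    rcases trichotomous_of WellOrderingRel u w with h | h | h
    exacts [Or.inl (Or.inl h), Or.inl (Or.inr h), Or.inr (Or.inl h)]
  adjComparable u v _ := by
    rcases trichotomous_of WellOrderingRel u v with h | h | h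
    exacts [Or.inl (Or.inl h), Or.inl (Or.inr h), Or.inr (Or.inl h)]

def TDForest.comap (F : TDForest H') (f : H →g H') (hf : Function.Injective f) :
    TDForest H where
  anc u v := F.anc (f u) (f v)
  refl _ := F.refl _
  antisymm _ _ huv hvu := hf (F.antisymm _ _ huv hvu)
  trans _ _ _ := F.trans _ _ _
  ancChain _ _ _ := F.ancChain _ _ _
  adjComparable _ _ h := F.adjComparable _ _ (f.map_adj h)

lemma TDForest.depth_le (F : TDForest H) {k : ℕ} (h : ∀ v, {u | F.anc u v}.ncard ≤ k) :
    F.depth ≤ k :=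
  ciSup_le' h

lemma TDForest.ncard_anc_le [Finite W] (F : TDForest H) (v : W) :
    {u | F.anc u v}.ncard ≤ F.depth :=
  le_ciSup (f := fun v => {u | F.anc u v}.ncard) (Set.finite_range _).bddAbove v

lemma treedepth_le_depth (F : TDForest H) : treedepth H ≤ F.depth :=
  Nat.sInf_le ⟨F, le_rfl⟩

lemma exists_depth_le_treedepth (H : SimpleGraph W) : ∃ F : TDForest H, F.depth ≤ treedepth H :=
  Nat.sInf_mem (s := {k | ∃ F : TDForest H, F.depth ≤ k}) ⟨_, chainForest H, le_rfl⟩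

lemma treedepth_le_card [Finite W] (H : SimpleGraph W) : treedepth H ≤ Nat.card W :=
  (treedepth_le_depth (chainForest H)).trans <| TDForest.depth_le _ fun _ =>
    (Set.ncard_le_ncard (Set.subset_univ _)).trans (Set.ncard_univ W).le

lemma treedepth_le_of_injective [Finite W'] (f : H →g H') (hf : Function.Injective f) :
    treedepth H ≤ treedepth H' := by
  obtain ⟨F, hF⟩ := exists_depth_le_treedepth H'
  refine (treedepth_le_depth (F.comap f hf)).trans <| TDForest.depth_le _ fun v => ?_
  calc {u | F.anc (f u) (f v)}.ncard ≤ {u | F.anc u (f v)}.ncard :=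
        Set.ncard_le_ncard_of_injOn f (fun _ hu => hu) hf.injOn
    _ ≤ treedepth H' := (F.ncard_anc_le _).trans hF

lemma treedepth_le_one [Finite W] (hH : ∀ u v, ¬ H.Adj u v) : treedepth H ≤ 1 := by
  let F : TDForest H :=
    { anc := Eq, refl := Eq.refl, antisymm _ _ h _ := h, trans _ _ _ := Eq.trans
      ancChain _ _ _ h h' := Or.inl (h.trans h'.symm), adjComparable u v h := absurd h (hH u v) }
  exact (treedepth_le_depth F).trans <| F.depth_le fun v => by simp [F]

lemma TDForest.exists_common_anc (F : TDForest H) {a b : W} (p : H.Walk a b) :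
    ∃ m, F.anc m a ∧ F.anc m b := by
  induction p with
  | nil => exact ⟨_, F.refl _, F.refl _⟩
  | @cons u c b h p ih =>
    obtain ⟨m, hmc, hmb⟩ := ih
    rcases F.adjComparable u c h with huc | hcu
    · rcases F.ancChain m u c hmc huc with hmu | hum
      · exact ⟨m, hmu, hmb⟩
      · exact ⟨u, F.refl u, F.trans _ _ _ hum hmb⟩
    · exact ⟨m, F.trans _ _ _ hmc hcu, hmb⟩

lemma TDForest.exists_root [Finite W] (F : TDForest H) (hH : H.Connected) :
    ∃ r, ∀ v, F.anc r v := by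
  let _ : PartialOrder W :=
    { le := F.anc, le_refl := F.refl, le_trans := F.trans, le_antisymm := F.antisymm }
  obtain ⟨x⟩ := hH.nonempty
  obtain ⟨r, hrx, hr⟩ := Set.Finite.exists_le_minimal (Set.toFinite {u | F.anc u x}) (F.refl x)
  refine ⟨r, fun v => ?_⟩
  obtain ⟨m, hmx, hmv⟩ := F.exists_common_anc (hH.preconnected x v).some
  refine F.trans _ _ _ ?_ hmv
  rcases F.ancChain m r x hmx hr.1 with hmr | hrm
  · exact hr.le_of_le (y := m) hmx hmr
  · exact hrm

lemma card_le_treedepth [Finite W] (hH : ∀ u v, u ≠ v → H.Adj u v) :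
    Nat.card W ≤ treedepth H := by
  obtain ⟨F, hF⟩ := exists_depth_le_treedepth H
  rcases isEmpty_or_nonempty W with hW | hW
  · simp
  let _ : PartialOrder W :=
    { le := F.anc, le_refl := F.refl, le_trans := F.trans, le_antisymm := F.antisymm }
  obtain ⟨m, -, hm⟩ := Set.Finite.exists_le_maximal (Set.toFinite Set.univ) (Set.mem_univ hW.some)
  have hall : {u | F.anc u m} = Set.univ := by
    refine Set.eq_univ_of_forall fun u => ?_
    by_cases hum : u = m
    · exact hum ▸ F.refl m
    rcases F.adjComparable u m (hH u m hum) with h | h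
    exacts [h, hm.le_of_ge (y := u) trivial h]
  simpa [hall] using (F.ncard_anc_le m).trans hF

end Forest

section Components

variable {G : SimpleGraph V} {A B C D X : Set V} {u v : V}

lemma IsCompOf.mem_of_adj (hC : IsCompOf G A C) (hu : u ∈ C) (hv : v ∈ A) (huv : G.Adj u v) :
    v ∈ C := by
  by_contra hvC
  exact hC.2.2.2 u hu v ⟨hv, hvC⟩ huv

lemma IsCompOf.subset_of_connected (hC : IsCompOf G A C) (hX : (G.induce X).Connected)
    (hXA : X ⊆ A) (hvC : v ∈ C) (hvX : v ∈ X) : X ⊆ C := by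
  intro x hx
  obtain ⟨p⟩ := hX.preconnected ⟨v, hvX⟩ ⟨x, hx⟩
  suffices ∀ a b, (G.induce X).Walk a b → a.1 ∈ C → b.1 ∈ C from this _ _ p hvC
  intro a b p
  induction p with
  | nil => exact id
  | cons h _ ih => exact fun ha => ih (hC.mem_of_adj ha (hXA (Subtype.prop _)) h)

lemma IsCompOf.eq_of_mem {C' : Set V} (hC : IsCompOf G A C) (hC' : IsCompOf G A C')
    (hv : v ∈ C) (hv' : v ∈ C') : C = C' :=
  (hC'.subset_of_connected hC.2.2.1 hC.1 hv' hv).antisymm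
    (hC.subset_of_connected hC'.2.2.1 hC'.1 hv hv')

/-- A maximal connected subset of `A` through `v` is a component. -/
lemma exists_isCompOf_mem [Finite V] (hv : v ∈ A) : ∃ C, IsCompOf G A C ∧ v ∈ C := by
  obtain ⟨C, -, ⟨hCA, hvC, hC⟩, hmax⟩ := Set.Finite.exists_le_maximal
    (s := {C | C ⊆ A ∧ v ∈ C ∧ (G.induce C).Connected}) (Set.toFinite _)
    (a := {v}) ⟨Set.singleton_subset_iff.2 hv, rfl, by simp⟩
  refine ⟨C, ⟨hCA, ⟨v, hvC⟩, hC, fun x hx y hy hxy => hy.2 ?_⟩, hvC⟩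
  have hext : C ∪ {y} ∈ {C | C ⊆ A ∧ v ∈ C ∧ (G.induce C).Connected} :=
    ⟨Set.union_subset hCA (Set.singleton_subset_iff.2 hy.1), Or.inl hvC,
      connected_induce_union hC.preconnected (by simp)
        hx rfl hxy⟩
  exact hmax hext Set.subset_union_left (Or.inr rfl)

lemma IsCompOf.of_inter {B' : Set V} (hD : IsCompOf G B' D) (hB : B ⊆ B')
    (hC : IsCompOf G (D ∩ B) C) : IsCompOf G B C := by
  refine ⟨fun x hx => (hC.1 hx).2, hC.2.1, hC.2.2.1, fun x hx y hy hxy => ?_⟩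
  have hyD : y ∈ D := hD.mem_of_adj (hC.1 hx).1 (hB hy.1) hxy
  exact hC.2.2.2 x hx y ⟨⟨hyD, hy.1⟩, hy.2⟩ hxy

end Components

section AncIn

variable {G : SimpleGraph V} {C : Set V} {u v w : V}

def TDForest.AncIn (F : TDForest (G.induce C)) (u v : V) : Prop :=
  ∃ (hu : u ∈ C) (hv : v ∈ C), F.anc ⟨u, hu⟩ ⟨v, hv⟩

namespace TDForest

variable {F : TDForest (G.induce C)}

lemma AncIn.mem_left (h : F.AncIn u v) : u ∈ C := h.1

lemma AncIn.mem_right (h : F.AncIn u v) : v ∈ C := h.2.1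

lemma ancIn_refl (F : TDForest (G.induce C)) (hv : v ∈ C) : F.AncIn v v := ⟨hv, hv, F.refl _⟩

lemma AncIn.antisymm (huv : F.AncIn u v) (hvu : F.AncIn v u) :
    u = v := by
  obtain ⟨hu, hv, huv⟩ := huv
  exact congrArg Subtype.val (F.antisymm _ _ huv hvu.2.2)

lemma AncIn.trans (huv : F.AncIn u v) (hvw : F.AncIn v w) : F.AncIn u w :=
  ⟨huv.1, hvw.2.1, F.trans _ _ _ huv.2.2 hvw.2.2⟩

lemma AncIn.chain (huv : F.AncIn u v) (hwv : F.AncIn w v) :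
    F.AncIn u w ∨ F.AncIn w u :=
  (F.ancChain _ _ _ huv.2.2 hwv.2.2).imp (⟨huv.1, hwv.1, ·⟩) (⟨hwv.1, huv.1, ·⟩)

lemma ancIn_or_ancIn_of_adj (F : TDForest (G.induce C)) (hu : u ∈ C) (hv : v ∈ C)
    (huv : G.Adj u v) : F.AncIn u v ∨ F.AncIn v u :=
  (F.adjComparable ⟨u, hu⟩ ⟨v, hv⟩ huv).imp (⟨hu, hv, ·⟩) (⟨hv, hu, ·⟩)

lemma ncard_ancIn_le [Finite V] (F : TDForest (G.induce C)) (v : V) :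
    {u | F.AncIn u v}.ncard ≤ F.depth := by
  by_cases hv : v ∈ C
  · calc {u | F.AncIn u v}.ncard ≤ (Subtype.val '' {u | F.anc u ⟨v, hv⟩}).ncard :=
          Set.ncard_le_ncard (fun u ⟨hu, _, h⟩ => ⟨⟨u, hu⟩, h, rfl⟩)
      _ ≤ F.depth := (Set.ncard_image_of_injective _ Subtype.val_injective).trans_le
          (F.ncard_anc_le _)
  · simp [AncIn, hv]

end TDForest

end AncIn

section Constructions

variable {G : SimpleGraph V}

def TDForest.ofComponents [Finite V] (A : Set V) (F : ∀ C : Set V, TDForest (G.induce C)) :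
    TDForest (G.induce A) where
  anc u v := ∃ C, IsCompOf G A C ∧ (F C).AncIn u v
  refl v := by
    obtain ⟨C, hC, hvC⟩ := exists_isCompOf_mem v.2
    exact ⟨C, hC, (F C).ancIn_refl hvC⟩
  antisymm u v := by
    rintro ⟨C, hC, huv⟩ ⟨C', hC', hvu⟩
    obtain rfl := hC.eq_of_mem hC' huv.mem_left hvu.mem_right
    exact Subtype.ext (huv.antisymm hvu)
  trans u v w := by
    rintro ⟨C, hC, huv⟩ ⟨C', hC', hvw⟩
    obtain rfl := hC.eq_of_mem hC' huv.mem_right hvw.mem_left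
    exact ⟨C, hC, huv.trans hvw⟩
  ancChain u w v := by
    rintro ⟨C, hC, huv⟩ ⟨C', hC', hwv⟩
    obtain rfl := hC.eq_of_mem hC' huv.mem_right hwv.mem_right
    exact (huv.chain hwv).imp (⟨C, hC, ·⟩) (⟨C, hC, ·⟩)
  adjComparable u v huv := by
    obtain ⟨C, hC, huC⟩ := exists_isCompOf_mem u.2
    exact ((F C).ancIn_or_ancIn_of_adj huC (hC.mem_of_adj huC v.2 huv) huv).imp
      (⟨C, hC, ·⟩) (⟨C, hC, ·⟩)

lemma TDForest.ncard_anc_ofComponents_le [Finite V] {A C : Set V}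
    (F : ∀ C : Set V, TDForest (G.induce C)) {v : A} (hC : IsCompOf G A C) (hv : v.1 ∈ C) :
    {u | (ofComponents A F).anc u v}.ncard ≤ (F C).depth := by
  refine (Set.ncard_le_ncard_of_injOn Subtype.val ?_ Subtype.val_injective.injOn).trans
    ((F C).ncard_ancIn_le v)
  rintro u ⟨C', hC', huv⟩
  rwa [← hC.eq_of_mem hC' hv huv.mem_right] at huv

def TDForest.addRoot {A : Set V} (s : V) (F : TDForest (G.induce (A \ {s}))) :
    TDForest (G.induce A) where
  anc u v := u.1 = s ∨ F.AncIn u v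
  refl v := by
    by_cases hv : v.1 = s
    exacts [Or.inl hv, Or.inr (F.ancIn_refl ⟨v.2, hv⟩)]
  antisymm u v := by
    rintro (hu | huv) (hv | hvu)
    · exact Subtype.ext (hu.trans hv.symm)
    · exact absurd hu hvu.mem_right.2
    · exact absurd hv huv.mem_right.2
    · exact Subtype.ext (huv.antisymm hvu)
  trans u v w := by
    rintro (hu | huv) (hv | hvw)
    exacts [Or.inl hu, Or.inl hu, absurd hv huv.mem_right.2, Or.inr (huv.trans hvw)]
  ancChain u w v := by
    rintro (hu | huv) (hw | hwv)
    exacts [Or.inl (Or.inl hu), Or.inl (Or.inl hu), Or.inr (Or.inl hw),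
      (huv.chain hwv).imp Or.inr Or.inr]
  adjComparable u v huv := by
    by_cases hu : u.1 = s
    · exact Or.inl (Or.inl hu)
    by_cases hv : v.1 = s
    · exact Or.inr (Or.inl hv)
    exact (F.ancIn_or_ancIn_of_adj ⟨u.2, hu⟩ ⟨v.2, hv⟩ huv).imp Or.inr Or.inr

lemma TDForest.depth_addRoot_le [Finite V] {A : Set V} (s : V) (F : TDForest (G.induce (A \ {s}))) :
    (addRoot s F).depth ≤ F.depth + 1 := by
  refine TDForest.depth_le _ fun v => ?_
  calc {u | (addRoot s F).anc u v}.ncard ≤ ({u | F.AncIn u v} ∪ {s}).ncard := by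
          refine Set.ncard_le_ncard_of_injOn Subtype.val ?_ Subtype.val_injective.injOn
          rintro u (hu | hu)
          exacts [Or.inr hu, Or.inl hu]
    _ ≤ F.depth + 1 := (Set.ncard_union_le _ _).trans (by simpa using F.ncard_ancIn_le v)

end Constructions

section Induced

variable [Finite V] {G : SimpleGraph V} {A B C : Set V}

lemma treedepth_induce_mono (h : C ⊆ A) : treedepth (G.induce C) ≤ treedepth (G.induce A) :=
  treedepth_le_of_injective (G.induceHomOfLE h).toHom (G.induceHomOfLE h).injective

lemma treedepth_induce_univ (G : SimpleGraph V) : treedepth (G.induce Set.univ) = treedepth G :=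
  (treedepth_le_of_injective (induceUnivIso G).toHom (induceUnivIso G).injective).antisymm
    (treedepth_le_of_injective (induceUnivIso G).symm.toHom (induceUnivIso G).symm.injective)

/-- Deleting the root of an optimal elimination forest of a connected `G[A]`. -/
lemma exists_treedepth_induce_sdiff_singleton_lt (hA : (G.induce A).Connected) :
    ∃ r ∈ A, treedepth (G.induce (A \ {r})) < treedepth (G.induce A) := by
  obtain ⟨F, hF⟩ := exists_depth_le_treedepth (G.induce A)
  obtain ⟨r, hr⟩ := F.exists_root hA
  refine ⟨r, r.2, ?_⟩
  let ι := G.induceHomOfLE (Set.sdiff_subset : A \ {r.1} ⊆ A)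
  have hanc (v : ↥(A \ {r.1})) : {u | F.anc (ι u) (ι v)}.ncard < F.depth := by
    calc {u | F.anc (ι u) (ι v)}.ncard ≤ ({u | F.anc u (ι v)} \ {r}).ncard := by
          refine Set.ncard_le_ncard_of_injOn ι (fun u hu => ⟨hu, fun h => u.2.2 ?_⟩)
            ι.injective.injOn
          exact congrArg Subtype.val (Set.mem_singleton_iff.1 h)
      _ < {u | F.anc u (ι v)}.ncard := Set.ncard_sdiff_singleton_lt_of_mem (hr _)
      _ ≤ F.depth := F.ncard_anc_le _
  have hdepth : 0 < F.depth :=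
    ((Set.ncard_pos (s := {u | F.anc u r}) (Set.toFinite _)).2 ⟨r, F.refl r⟩).trans_le
      (F.ncard_anc_le r)
  have := (treedepth_le_depth (F.comap ι.toHom ι.injective)).trans
    (TDForest.depth_le _ fun v => Nat.le_sub_one_of_lt (hanc v))
  omega

lemma treedepth_induce_le_ncard_add (A S : Set V) :
    treedepth (G.induce A) ≤ S.ncard + treedepth (G.induce (A \ S)) := by
  induction S, S.toFinite using Set.Finite.induction_on with
  | empty => rw [Set.ncard_empty, Set.sdiff_empty, zero_add]
  | @insert s S hsS _ ih =>
    obtain ⟨F, hF⟩ := exists_depth_le_treedepth (G.induce ((A \ S) \ {s}))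
    have hs : treedepth (G.induce (A \ S)) ≤ treedepth (G.induce ((A \ S) \ {s})) + 1 :=
      (treedepth_le_depth (F.addRoot s)).trans ((F.depth_addRoot_le s).trans (by omega))
    rw [Set.ncard_insert_of_notMem hsS, Set.insert_eq, Set.union_comm, ← Set.sdiff_sdiff]
    omega

variable (G) in
def componentTreedepths (B : Set V) : Set ℕ :=
  {m | ∃ C, IsCompOf G B C ∧ m = treedepth (G.induce C)}

lemma IsCompOf.treedepth_le_sSup (hC : IsCompOf G B C) :
    treedepth (G.induce C) ≤ sSup (componentTreedepths G B) :=
  le_csSup ⟨Nat.card V, by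
    rintro _ ⟨C, -, rfl⟩
    exact (treedepth_le_card _).trans (Nat.card_le_card_of_injective _ Subtype.val_injective)⟩
    ⟨C, hC, rfl⟩

lemma treedepth_induce_eq_sSup (B : Set V) :
    treedepth (G.induce B) = sSup (componentTreedepths G B) := by
  refine le_antisymm ?_ (csSup_le' fun _ ⟨C, hC, hm⟩ => hm ▸ treedepth_induce_mono hC.1)
  choose F hF using fun C : Set V => exists_depth_le_treedepth (G.induce C)
  refine (treedepth_le_depth (TDForest.ofComponents B F)).trans (TDForest.depth_le _ fun v => ?_)
  obtain ⟨C, hC, hvC⟩ := exists_isCompOf_mem v.2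
  exact ((TDForest.ncard_anc_ofComponents_le F hC hvC).trans (hF C)).trans hC.treedepth_le_sSup

/-- Each component of `G[B']` loses at most `B' \ B` and falls apart into components of `G[B]`. -/
lemma sSup_componentTreedepths_le_ncard_add {B' : Set V} (hB : B ⊆ B') :
    sSup (componentTreedepths G B') ≤ (B' \ B).ncard + sSup (componentTreedepths G B) := by
  refine csSup_le' ?_
  rintro _ ⟨D, hD, rfl⟩
  calc treedepth (G.induce D) ≤ (D \ B).ncard + treedepth (G.induce (D \ (D \ B))) :=
        treedepth_induce_le_ncard_add D (D \ B)
    _ ≤ (B' \ B).ncard + sSup (componentTreedepths G B) := by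
      gcongr ?_ + ?_
      · exact Set.ncard_le_ncard (Set.sdiff_subset_sdiff_left hD.1)
      · rw [Set.sdiff_sdiff_right_self, treedepth_induce_eq_sSup]
        exact csSup_le' fun _ ⟨C, hC, hm⟩ => hm ▸ (hD.of_inter hB hC).treedepth_le_sSup

end Induced

section Separators

variable {G : SimpleGraph V} {A S S' : Set V} {a b r : V}

variable (G) in
noncomputable def sepValue (A S : Set V) : ℕ :=
  S.ncard + sSup (componentTreedepths G (A \ S))

lemma treedepth_induce_le_sepValue [Finite V] (A S : Set V) :
    treedepth (G.induce A) ≤ sepValue G A S :=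
  (treedepth_induce_le_ncard_add A S).trans_eq (by rw [sepValue, treedepth_induce_eq_sSup])

lemma sepValue_mono [Finite V] (h : S' ⊆ S) : sepValue G A S' ≤ sepValue G A S := by
  have hsSup := sSup_componentTreedepths_le_ncard_add (G := G) (Set.sdiff_subset_sdiff_right h :
    A \ S ⊆ A \ S')
  have hdiff : ((A \ S') \ (A \ S)).ncard ≤ (S \ S').ncard :=
    Set.ncard_le_ncard fun x ⟨⟨hxA, hxS'⟩, hx⟩ => ⟨by_contra fun hxS => hx ⟨hxA, hxS⟩, hxS'⟩
  have hcard := Set.ncard_sdiff_add_ncard_of_subset h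
  unfold sepValue
  omega

lemma sepValue_empty_le [Finite V] : sepValue G A ∅ ≤ treedepth (G.induce A) := by
  rw [sepValue, Set.ncard_empty, zero_add, Set.sdiff_empty, treedepth_induce_eq_sSup]

lemma IsSepIn.exists_isMinSepIn_subset [Finite V] (h : IsSepIn G A S a b) :
    ∃ S' ⊆ S, IsMinSepIn G A S' a b := by
  obtain ⟨S', -, ⟨hS'S, hS'⟩, hmin⟩ := Set.Finite.exists_le_minimal
    (s := {T | T ⊆ S ∧ IsSepIn G A T a b}) (Set.toFinite _) ⟨subset_rfl, h⟩
  exact ⟨S', hS'S, hS', fun T hT hsep => hT.2 (hmin ⟨hT.1.trans hS'S, hsep⟩ hT.1)⟩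

lemma IsSepIn.insert (h : IsSepIn G (A \ {r}) S a b) (hr : r ∈ A) :
    IsSepIn G A (insert r S) a b := by
  obtain ⟨hS, ha, hb, hab⟩ := h
  rw [Set.sdiff_sdiff, Set.singleton_union] at ha hb hab
  exact ⟨Set.insert_subset hr (hS.trans Set.sdiff_subset), ha, hb, hab⟩

lemma sepValue_insert_le : sepValue G A (insert r S) ≤ sepValue G (A \ {r}) S + 1 := by
  rw [sepValue, sepValue, Set.sdiff_sdiff, Set.singleton_union]
  have := Set.ncard_insert_le r S
  omega

lemma induce_pair_eq_bot (hab : ¬ G.Adj a b) : G.induce {a, b} = ⊥ := by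
  ext ⟨x, hx⟩ ⟨y, hy⟩
  simp only [comap_adj, Function.Embedding.subtype_apply, bot_adj, iff_false]
  rcases hx with rfl | rfl <;> rcases hy with rfl | rfl
  exacts [G.irrefl, hab, fun h => hab h.symm, G.irrefl]

lemma isSepIn_sdiff_pair (ha : a ∈ A) (hb : b ∈ A) (hab : a ≠ b) (hnadj : ¬ G.Adj a b) :
    IsSepIn G A (A \ {a, b}) a b := by
  rw [IsSepIn, Set.sdiff_sdiff_cancel_left (Set.insert_subset ha (Set.singleton_subset_iff.2 hb))]
  refine ⟨Set.sdiff_subset, Or.inl rfl, Or.inr rfl, fun ⟨_, _, hr⟩ => hab ?_⟩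
  rw [induce_pair_eq_bot hnadj, reachable_bot] at hr
  exact congrArg Subtype.val hr

lemma sepValue_sdiff_pair_lt [Finite V] (ha : a ∈ A) (hb : b ∈ A) (hab : a ≠ b)
    (hnadj : ¬ G.Adj a b) :
    sepValue G A (A \ {a, b}) < A.ncard := by
  have hsub : {a, b} ⊆ A := Set.insert_subset ha (Set.singleton_subset_iff.2 hb)
  have hcard := Set.ncard_sdiff_add_ncard_of_subset hsub
  have hcomp : sSup (componentTreedepths G {a, b}) ≤ 1 := by
    rw [← treedepth_induce_eq_sSup, induce_pair_eq_bot hnadj]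
    exact treedepth_le_one fun _ _ h => h
  rw [Set.ncard_pair hab] at hcard
  rw [sepValue, Set.sdiff_sdiff_cancel_left hsub]
  omega

lemma exists_isSepIn_sepValue_le [Finite V] (A : Set V)
    (hA : ∃ a ∈ A, ∃ b ∈ A, a ≠ b ∧ ¬ G.Adj a b) :
    ∃ S a b, IsSepIn G A S a b ∧ sepValue G A S ≤ treedepth (G.induce A) := by
  induction A using WellFoundedLT.induction with | _ A ih
  obtain ⟨a, ha, b, hb, hab, hnadj⟩ := hA
  by_cases hconn : (G.induce A).Connected
  swap
  · obtain ⟨x, y, hxy⟩ : ∃ x y : A, ¬ (G.induce A).Reachable x y := by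
      by_contra! h
      exact hconn ((connected_iff _).2 ⟨h, ⟨⟨a, ha⟩⟩⟩)
    refine ⟨∅, x, y, ⟨Set.empty_subset _, ?_, ?_, ?_⟩, sepValue_empty_le⟩ <;>
      rw [Set.sdiff_empty]
    exacts [x.2, y.2, fun ⟨_, _, h⟩ => hxy h]
  obtain ⟨r, hr, hrtd⟩ := exists_treedepth_induce_sdiff_singleton_lt hconn
  by_cases hK : ∃ x ∈ A \ {r}, ∃ y ∈ A \ {r}, x ≠ y ∧ ¬ G.Adj x y
  · obtain ⟨S, x, y, hS, hval⟩ := ih (A \ {r}) (Set.sdiff_singleton_ssubset.2 hr) hK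
    exact ⟨insert r S, x, y, hS.insert hr, sepValue_insert_le.trans (by omega)⟩
  · push Not at hK
    have hclique := card_le_treedepth (H := G.induce (A \ {r}))
      fun x y hxy => hK x x.2 y y.2 (Subtype.coe_injective.ne hxy)
    rw [Nat.card_coe_set_eq, Set.ncard_sdiff_singleton_of_mem hr] at hclique
    have := sepValue_sdiff_pair_lt (G := G) ha hb hab hnadj
    exact ⟨A \ {a, b}, a, b, isSepIn_sdiff_pair ha hb hab hnadj, by omega⟩

end Separators

theorem stmt2 {V : Type*} [Fintype V] (G : SimpleGraph V)
    (hnc : ¬ ∀ u v : V, u ≠ v → G.Adj u v) :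
    treedepth G =
      sInf {n : ℕ | ∃ S : Set V, IsMinSep G S ∧
        n = S.ncard +
          sSup {m : ℕ | ∃ C : Set V, IsCompOf G (Sᶜ : Set V) C ∧
            m = treedepth (G.induce C)}} := by
  have hval (S : Set V) : S.ncard + sSup (componentTreedepths G Sᶜ) = sepValue G Set.univ S := by
    rw [sepValue, Set.compl_eq_univ_sdiff]
  change treedepth G =
    sInf {n | ∃ S, IsMinSep G S ∧ n = S.ncard + sSup (componentTreedepths G Sᶜ)}
  simp_rw [hval]
  push Not at hnc
  obtain ⟨u, v, huv, hnadj⟩ := hnc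
  obtain ⟨S, a, b, hsep, hS⟩ :=
    exists_isSepIn_sepValue_le Set.univ ⟨u, trivial, v, trivial, huv, hnadj⟩
  obtain ⟨S', hS'S, hmin⟩ := hsep.exists_isMinSepIn_subset
  have hS' : sepValue G Set.univ S' ∈ {n | ∃ S, IsMinSep G S ∧ n = sepValue G Set.univ S} :=
    ⟨S', ⟨a, b, hmin⟩, rfl⟩
  rw [← treedepth_induce_univ]
  refine le_antisymm (le_csInf ⟨_, hS'⟩ ?_)
    ((Nat.sInf_le hS').trans ((sepValue_mono hS'S).trans hS))
  rintro _ ⟨T, -, rfl⟩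
  exact treedepth_induce_le_sepValue _ _

end PACE
end

section
/- Let G be a graph, X a subset of V(G), and S a minimal separator of G[X] with |S| ≤ k. Then there exists a minimal separator S' of G with |S'| ≤ k + |N(X)| such that S = S' ∩ X, where N(X) denotes the neighborhood of X in G. -/
namespace PACE

open SimpleGraph

variable {V : Type*}

lemma reachIn_mono {G : SimpleGraph V} {A B : Set V} (h : A ⊆ B) {a b : V} :
    ReachIn G A a b → ReachIn G B a b := by
  rintro ⟨ha, hb, hr⟩
  exact ⟨h ha, h hb, hr.map ⟨Set.inclusion h, fun ha => ha⟩⟩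

lemma reachIn_of_adj {G : SimpleGraph V} {B : Set V} {u v : V}
    (hu : u ∈ B) (hv : v ∈ B) (h : G.Adj u v) : ReachIn G B u v :=
  ⟨hu, hv, SimpleGraph.Adj.reachable (by exact h)⟩

lemma reachIn_trans {G : SimpleGraph V} {B : Set V} {a b c : V}
    (h1 : ReachIn G B a b) (h2 : ReachIn G B b c) : ReachIn G B a c := by
  obtain ⟨ha, hb, r1⟩ := h1
  obtain ⟨hb', hc, r2⟩ := h2
  exact ⟨ha, hc, r1.trans r2⟩

lemma reachIn_closed {G : SimpleGraph V} {A D : Set V}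
    (hcl : ∀ u v, u ∈ D → v ∈ A → G.Adj u v → v ∈ D) {a b : V}
    (ha : a ∈ D) : ReachIn G A a b → ReachIn G (A ∩ D) a b := by
  rintro ⟨haA, hbA, ⟨w⟩⟩
  suffices H : ∀ (x y : ↥A), (G.induce A).Walk x y → x.val ∈ D →
      ReachIn G (A ∩ D) x.val y.val from H _ _ w ha
  intro x y w
  induction w with
  | @nil u => exact fun hx => ⟨⟨u.2, hx⟩, ⟨u.2, hx⟩, Reachable.refl _⟩
  | @cons u v z h p ih =>
    intro hx
    have hadj : G.Adj u.val v.val := h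
    have hvD : v.val ∈ D := hcl u.val v.val hx v.2 hadj
    exact reachIn_trans (reachIn_of_adj ⟨u.2, hx⟩ ⟨v.2, hvD⟩ hadj) (ih hvD)

def eAux (X : Set V) (A : Set ↥X) : {p : ↥X // p ∈ A} ≃ {v : V // v ∈ Subtype.val '' A} where
  toFun p := ⟨p.1.1, ⟨p.1, p.2, rfl⟩⟩
  invFun v := ⟨⟨v.1, by obtain ⟨p, hp, h⟩ := v.2; exact h ▸ p.2⟩, by
    obtain ⟨p, hp, h⟩ := v.2
    have : (⟨v.1, by exact h ▸ p.2⟩ : ↥X) = p := Subtype.ext h.symm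
    rwa [this]⟩
  left_inv p := Subtype.ext (Subtype.ext rfl)
  right_inv v := Subtype.ext rfl

def isoAux (G : SimpleGraph V) (X : Set V) (A : Set ↥X) :
    (G.induce X).induce A ≃g G.induce (Subtype.val '' A) :=
  ⟨eAux X A, by intro p q; exact Iff.rfl⟩

lemma reachIn_val_iff (G : SimpleGraph V) (X : Set V) (A : Set ↥X) (a b : ↥X) :
    ReachIn (G.induce X) A a b ↔ ReachIn G (Subtype.val '' A) a.val b.val := by
  constructor
  · rintro ⟨ha, hb, r⟩
    exact ⟨⟨a, ha, rfl⟩, ⟨b, hb, rfl⟩, r.map (isoAux G X A).toHom⟩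
  · rintro ⟨ha, hb, r⟩
    obtain ⟨p, hp, hpv⟩ := ha
    obtain ⟨q, hq, hqv⟩ := hb
    have hpa : p = a := Subtype.ext hpv
    have hqb : q = b := Subtype.ext hqv
    subst hpa; subst hqb
    refine ⟨hp, hq, ?_⟩
    have := r.map (isoAux G X A).symm.toHom
    exact this

lemma isSepIn_val_iff (G : SimpleGraph V) (X : Set V) (S₀ : Set ↥X) (a b : ↥X) :
    IsSepIn (G.induce X) Set.univ S₀ a b ↔ IsSepIn G X (Subtype.val '' S₀) a.val b.val := by
  have himg : Subtype.val '' (Set.univ \ S₀) = X \ Subtype.val '' S₀ := by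
    rw [Set.image_diff Subtype.val_injective, Set.image_univ, Subtype.range_coe]
  constructor
  · rintro ⟨_, ⟨_, haS⟩, ⟨_, hbS⟩, hnr⟩
    refine ⟨?_, ⟨a.2, ?_⟩, ⟨b.2, ?_⟩, ?_⟩
    · rintro v ⟨p, _, rfl⟩; exact p.2
    · rintro ⟨p, hp, hpv⟩; exact haS (Subtype.ext hpv ▸ hp)
    · rintro ⟨p, hp, hpv⟩; exact hbS (Subtype.ext hpv ▸ hp)
    · rw [← himg, ← reachIn_val_iff]
      exact hnr
  · rintro ⟨_, ⟨_, haS⟩, ⟨_, hbS⟩, hnr⟩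
    refine ⟨Set.subset_univ _, ⟨trivial, fun h => haS ⟨a, h, rfl⟩⟩,
      ⟨trivial, fun h => hbS ⟨b, h, rfl⟩⟩, ?_⟩
    rw [reachIn_val_iff, himg]
    exact hnr


theorem stmt3 {V : Type*} [Fintype V] (G : SimpleGraph V) (X : Set V)
    (k : ℕ) (S : Set ↥X) (hS : IsMinSep (G.induce X) S)
    (hk : S.ncard ≤ k) :
    ∃ S' : Set V, IsMinSep G S' ∧
      S'.ncard ≤ k + (nbhdSet G X).ncard ∧
      Subtype.val '' S = S' ∩ X := by
  classical
  obtain ⟨a, b, hsep, hmin⟩ := hS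
  set T : Set V := Subtype.val '' S with hT
  set N : Set V := nbhdSet G X with hN
  have hTX : T ⊆ X := by rintro v ⟨p, _, rfl⟩; exact p.2
  have hNX : ∀ v ∈ X, v ∉ N := fun v hv hn => hn.1 hv
  have hsepT : IsSepIn G X T a.val b.val := (isSepIn_val_iff G X S a b).mp hsep
  -- minimality in terms of T
  have hminT : ∀ T₀, T₀ ⊂ T → ¬ IsSepIn G X T₀ a.val b.val := by
    intro T₀ hT₀ hcon
    have hT₀X : T₀ ⊆ X := hT₀.1.trans hTX
    set S₀ : Set ↥X := Subtype.val ⁻¹' T₀ with hS₀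
    have himg : Subtype.val '' S₀ = T₀ := by
      rw [hS₀, Subtype.image_preimage_coe]
      exact Set.inter_eq_right.mpr hT₀X
    have hsub : S₀ ⊂ S := by
      constructor
      · intro p hp
        have : p.val ∈ T := hT₀.1 hp
        obtain ⟨q, hq, hqv⟩ := this
        rwa [← Subtype.ext hqv]
      · intro hcon2
        apply hT₀.2
        intro v hv
        obtain ⟨p, hp, rfl⟩ := hv
        exact hcon2 hp
    exact hmin S₀ hsub ((isSepIn_val_iff G X S₀ a b).mpr (himg ▸ hcon))
  -- T ∪ N is an a,b-separator of G
  have haT : a.val ∈ X \ T := hsepT.2.1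
  have hbT : b.val ∈ X \ T := hsepT.2.2.1
  have hbig : IsSepIn G Set.univ (T ∪ N) a.val b.val := by
    refine ⟨Set.subset_univ _, ⟨trivial, ?_⟩, ⟨trivial, ?_⟩, ?_⟩
    · rintro (h | h); exacts [haT.2 h, hNX _ haT.1 h]
    · rintro (h | h); exacts [hbT.2 h, hNX _ hbT.1 h]
    · intro hr
      have hcl : ∀ u v, u ∈ X → v ∈ Set.univ \ (T ∪ N) → G.Adj u v → v ∈ X := by
        intro u v hu hv hadj
        by_contra hvX
        exact hv.2 (Or.inr ⟨hvX, u, hu, hadj⟩)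
      have := reachIn_closed hcl haT.1 hr
      have hsub : (Set.univ \ (T ∪ N)) ∩ X ⊆ X \ T := by
        rintro v ⟨⟨_, hv⟩, hvX⟩
        exact ⟨hvX, fun h => hv (Or.inl h)⟩
      exact hsepT.2.2.2 (reachIn_mono hsub this)
  -- take a minimal separator inside T ∪ N
  set F : Set (Set V) := {W | W ⊆ T ∪ N ∧ IsSepIn G Set.univ W a.val b.val} with hF
  obtain ⟨S', hS'F, hS'min⟩ :=
    (Finite.to_wellFoundedLT (α := Set V)).wf.has_min F ⟨T ∪ N, Set.Subset.rfl, hbig⟩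
  refine ⟨S', ⟨a.val, b.val, hS'F.2, ?_⟩, ?_, ?_⟩
  · intro W hW hWsep
    exact hS'min W ⟨hW.1.trans hS'F.1, hWsep⟩ hW
  · calc S'.ncard ≤ (T ∪ N).ncard := Set.ncard_le_ncard hS'F.1 (Set.toFinite _)
      _ ≤ T.ncard + N.ncard := Set.ncard_union_le _ _
      _ ≤ k + N.ncard := by
          have : T.ncard = S.ncard := Set.ncard_image_of_injective _ Subtype.val_injective
          omega
  · -- S' ∩ X = T
    have h1 : S' ∩ X ⊆ T := by
      rintro v ⟨hvS', hvX⟩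
      rcases hS'F.1 hvS' with h | h
      · exact h
      · exact absurd hvX h.1
    have h2 : IsSepIn G X (S' ∩ X) a.val b.val := by
      refine ⟨Set.inter_subset_right, ⟨haT.1, fun h => hS'F.2.2.1.2 h.1⟩,
        ⟨hbT.1, fun h => hS'F.2.2.2.1.2 h.1⟩, ?_⟩
      intro hr
      apply hS'F.2.2.2.2
      refine reachIn_mono ?_ hr
      rintro v ⟨hvX, hv⟩
      exact ⟨trivial, fun h => hv ⟨h, hvX⟩⟩
    have : ¬ (S' ∩ X ⊂ T) := fun hc => hminT _ hc h2
    have heq : S' ∩ X = T := by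
      rcases h1.eq_or_ssubset with h | h
      · exact h
      · exact absurd h this
    exact heq.symm

end PACE
end

section
/- Let u and v be non-adjacent vertices of a graph G. If the minimum u,v-vertex cut has size at least k and td(G) ≤ k, then td(G) = td(G'), where G' is obtained from G by adding the edge uv. -/
namespace PACE

open SimpleGraph

variable {V : Type*}

/-- Restrict a forest along a subgraph relation. -/
def TDForest.ofLE {G G' : SimpleGraph V} (h : G ≤ G') (F : TDForest G') :
    TDForest G where
  anc := F.anc
  refl := F.refl
  antisymm := F.antisymm
  trans := F.trans
  ancChain := F.ancChain
  adjComparable := fun a b hab => F.adjComparable a b (h hab)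

/-- A trivial elimination forest from a linear order on `V`. -/
noncomputable def anyForest (G : SimpleGraph V) [Fintype V] : TDForest G :=
  { anc := fun a b => (Fintype.equivFin V) a ≤ (Fintype.equivFin V) b
    refl := fun _ => le_refl _
    antisymm := fun _ _ h1 h2 => (Fintype.equivFin V).injective (le_antisymm h1 h2)
    trans := fun _ _ _ => le_trans
    ancChain := fun _ _ _ _ _ => le_total _ _
    adjComparable := fun _ _ _ => le_total _ _ }

lemma walk_anc {G : SimpleGraph V} (F : TDForest G) {A : Set V} {a b : A}
    (w : (G.induce A).Walk a b) : ∃ x : A, F.anc x a ∧ F.anc x b := by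
  induction w with
  | nil => exact ⟨_, F.refl _, F.refl _⟩
  | @cons c d e h p ih =>
    obtain ⟨x, hxd, hxb⟩ := ih
    have hadj : G.Adj (c : V) (d : V) := h
    rcases F.adjComparable _ _ hadj with h1 | h1
    · rcases F.ancChain (x : V) (c : V) (d : V) hxd h1 with h2 | h2
      · exact ⟨x, h2, hxb⟩
      · exact ⟨c, F.refl _, F.trans _ _ _ h2 hxb⟩
    · exact ⟨x, F.trans _ _ _ hxd h1, hxb⟩

theorem stmt5 {V : Type*} [Fintype V] (G : SimpleGraph V) (u v : V)
    (huv : ¬ G.Adj u v) (k : ℕ)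
    (hcut : ∀ S : Set V, IsSepIn G Set.univ S u v → k ≤ S.ncard)
    (htd : treedepth G ≤ k) :
    treedepth G = treedepth (G ⊔ SimpleGraph.fromEdgeSet {s(u, v)}) := by
  classical
  set G' := G ⊔ SimpleGraph.fromEdgeSet {s(u, v)} with hG'
  have hle : G ≤ G' := le_sup_left
  -- the defining set for treedepth G is nonempty
  have hne : {n | ∃ F : TDForest G, F.depth ≤ n}.Nonempty :=
    ⟨(anyForest G).depth, anyForest G, le_refl _⟩
  obtain ⟨F, hF⟩ : ∃ F : TDForest G, F.depth ≤ treedepth G := Nat.sInf_mem hne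
  -- u and v are comparable in F
  have hcomp : F.anc u v ∨ F.anc v u := by
    by_contra hnc
    push_neg at hnc
    obtain ⟨h1, h2⟩ := hnc
    set S : Set V := {w | F.anc w u ∧ F.anc w v} with hS
    have huS : u ∉ S := fun h => h1 h.2
    have hvS : v ∉ S := fun h => h2 h.1
    have hsep : IsSepIn G Set.univ S u v := by
      refine ⟨Set.subset_univ _, ⟨trivial, huS⟩, ⟨trivial, hvS⟩, ?_⟩
      rintro ⟨hu', hv', hr⟩
      obtain ⟨w⟩ := hr
      obtain ⟨x, hxu, hxv⟩ := walk_anc F w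
      exact x.2.2 ⟨hxu, hxv⟩
    have hk := hcut S hsep
    -- size bound: insert u S ⊆ ancestors of u
    have hsub : insert u S ⊆ {w | F.anc w u} := by
      rintro w (rfl | hw)
      · exact F.refl _
      · exact hw.1
    have hfin : {w | F.anc w u}.Finite := Set.toFinite _
    have hcard : (insert u S).ncard ≤ {w | F.anc w u}.ncard :=
      Set.ncard_le_ncard hsub hfin
    have hins : (insert u S).ncard = S.ncard + 1 :=
      Set.ncard_insert_of_notMem huS (hfin.subset (fun w hw => hw.1))
    have hanc : {w | F.anc w u}.ncard ≤ F.depth := by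
      have : BddAbove (Set.range fun x => Set.ncard {w | F.anc w x}) :=
        (Set.finite_range _).bddAbove
      exact le_ciSup this u
    omega
  -- build a forest for G'
  have hF' : ∃ F' : TDForest G', F'.depth = F.depth := by
    refine ⟨⟨F.anc, F.refl, F.antisymm, F.trans, F.ancChain, ?_⟩, rfl⟩
    intro a b hab
    rcases hab with hab | hab
    · exact F.adjComparable a b hab
    · rw [SimpleGraph.fromEdgeSet_adj] at hab
      have := hab.1
      simp only [Set.mem_singleton_iff, Sym2.eq_iff] at this
      rcases this with ⟨rfl, rfl⟩ | ⟨rfl, rfl⟩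
      · exact hcomp
      · exact hcomp.symm
  obtain ⟨F', hF'eq⟩ := hF'
  apply le_antisymm
  · -- treedepth G ≤ treedepth G'
    have hne' : {n | ∃ F : TDForest G', F.depth ≤ n}.Nonempty :=
      ⟨(anyForest G').depth, anyForest G', le_refl _⟩
    obtain ⟨F2, hF2⟩ : ∃ F2 : TDForest G', F2.depth ≤ treedepth G' :=
      Nat.sInf_mem hne'
    exact Nat.sInf_le ⟨F2.ofLE hle, hF2⟩
  · exact Nat.sInf_le ⟨F', hF'eq ▸ hF⟩

end PACE
end

section
/- If G has a treedepth decomposition of depth at most k and u,v are non-adjacent vertices with minimum u,v-vertex cut of size at least k, then in every treedepth decomposition of G of depth at most k, either u is an ancestor of v or v is an ancestor of u. -/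
namespace PACE

open SimpleGraph

variable {V : Type*}

/-- Along any walk in an induced subgraph, some vertex is a common ancestor
of the endpoints. -/
lemma walk_common_anc {G : SimpleGraph V} (F : TDForest G) (A : Set V) :
    ∀ {a b : A} (_ : (G.induce A).Walk a b),
      ∃ w : V, w ∈ A ∧ F.anc w a.1 ∧ F.anc w b.1
  | a, _, SimpleGraph.Walk.nil => ⟨a.1, a.2, F.refl _, F.refl _⟩
  | x, b, @SimpleGraph.Walk.cons _ _ _ c _ h p => by
    obtain ⟨w, hwA, hwc, hwb⟩ := walk_common_anc F A p
    have hadj : G.Adj x.1 c.1 := h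
    rcases F.adjComparable _ _ hadj with hxc | hcx
    · rcases F.ancChain x.1 w c.1 hxc hwc with hxw | hwx
      · exact ⟨x.1, x.2, F.refl _, F.trans _ _ _ hxw hwb⟩
      · exact ⟨w, hwA, hwx, hwb⟩
    · exact ⟨w, hwA, F.trans _ _ _ hwc hcx, hwb⟩

theorem stmt7 {V : Type*} [Fintype V] (G : SimpleGraph V) (k : ℕ)
    (hex : ∃ F : TDForest G, F.depth ≤ k) (u v : V) (huv : ¬ G.Adj u v)
    (hcut : ∀ S : Set V, IsSepIn G Set.univ S u v → k ≤ S.ncard) :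
    ∀ F : TDForest G, F.depth ≤ k → F.anc u v ∨ F.anc v u := by
  intro F hF
  by_contra hcon
  push_neg at hcon
  obtain ⟨h1, h2⟩ := hcon
  set S : Set V := {w | F.anc w u ∧ F.anc w v} with hS
  have huS : u ∉ S := fun h => h1 h.2
  have hvS : v ∉ S := fun h => h2 h.1
  have hsep : IsSepIn G Set.univ S u v := by
    refine ⟨Set.subset_univ _, ⟨trivial, huS⟩, ⟨trivial, hvS⟩, ?_⟩
    rintro ⟨ha, hb, hr⟩
    obtain ⟨p⟩ := hr
    obtain ⟨w, hwA, hwu, hwv⟩ := walk_common_anc F _ p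
    exact hwA.2 ⟨hwu, hwv⟩
  have hk := hcut S hsep
  have hsub : S ⊂ {w | F.anc w u} := by
    constructor
    · intro w hw; exact hw.1
    · intro hsup
      exact huS (hsup (F.refl u))
  have hlt : S.ncard < Set.ncard {w | F.anc w u} :=
    Set.ncard_lt_ncard hsub (Set.toFinite _)
  have hle : Set.ncard {w | F.anc w u} ≤ F.depth := by
    refine le_ciSup (f := fun x => Set.ncard {w | F.anc w x}) ?_ u
    refine ⟨Fintype.card V, ?_⟩
    rintro _ ⟨x, rfl⟩
    calc Set.ncard {w | F.anc w x} ≤ (Set.univ : Set V).ncard :=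
          Set.ncard_le_ncard (Set.subset_univ _) (Set.toFinite _)
      _ = Fintype.card V := by simp [Set.ncard_univ]
  omega

end PACE
end

section
/- If there exist non-adjacent vertices u, v in G with |N(u) ∩ N(v)| ≥ k and td(G) ≤ k, then td(G + uv) = td(G). -/
namespace PACE

open SimpleGraph

variable {V : Type*}

/-- trivial linear forest -/
noncomputable def trivForest [Fintype V] (G : SimpleGraph V) : TDForest G := by
  classical
  let e := Fintype.equivFin V
  exact {
    anc := fun a b => e a ≤ e b
    refl := fun _ => le_refl _
    antisymm := fun a b h1 h2 => e.injective (le_antisymm h1 h2)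
    trans := fun a b c h1 h2 => le_trans h1 h2
    ancChain := fun a b c _ _ => le_total (e a) (e b)
    adjComparable := fun a b _ => le_total (e a) (e b) }

lemma depth_le_card [Fintype V] {G : SimpleGraph V} (F : TDForest G) :
    F.depth ≤ Fintype.card V := by
  apply ciSup_le'
  intro v
  calc {u | F.anc u v}.ncard ≤ (Set.univ : Set V).ncard :=
        Set.ncard_le_ncard (Set.subset_univ _) Set.finite_univ
    _ = Fintype.card V := by simp [Set.ncard_univ]

lemma tdSet_nonempty [Fintype V] (G : SimpleGraph V) :
    {k | ∃ F : TDForest G, F.depth ≤ k}.Nonempty :=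
  ⟨Fintype.card V, trivForest G, depth_le_card _⟩

lemma exists_opt [Fintype V] (G : SimpleGraph V) :
    ∃ F : TDForest G, F.depth ≤ treedepth G :=
  Nat.sInf_mem (tdSet_nonempty G)

theorem stmt8 {V : Type*} [Fintype V] (G : SimpleGraph V) (u v : V)
    (huv : ¬ G.Adj u v) (k : ℕ)
    (hN : k ≤ (G.neighborSet u ∩ G.neighborSet v).ncard)
    (htd : treedepth G ≤ k) :
    treedepth (G ⊔ SimpleGraph.fromEdgeSet {s(u, v)}) = treedepth G := by
  set G' := G ⊔ SimpleGraph.fromEdgeSet {s(u, v)} with hG'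
  -- td G ≤ td G'
  obtain ⟨F', hF'⟩ := exists_opt G'
  have hmono : treedepth G ≤ treedepth G' := by
    refine Nat.sInf_le ⟨⟨F'.anc, F'.refl, F'.antisymm, F'.trans, F'.ancChain, ?_⟩, hF'⟩
    intro a b hab
    exact F'.adjComparable a b (by simp [hG', hab])
  -- optimal forest of G
  obtain ⟨F, hF⟩ := exists_opt G
  -- u and v are comparable in F
  have hcomp : F.anc u v ∨ F.anc v u := by
    by_contra h
    push_neg at h
    obtain ⟨h1, h2⟩ := h
    have hsub : insert u (G.neighborSet u ∩ G.neighborSet v) ⊆ {x | F.anc x u} := by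
      rintro w (rfl | ⟨hwu, hwv⟩)
      · exact F.refl _
      · have cu := F.adjComparable u w hwu
        have cv := F.adjComparable v w hwv
        rcases cu with cu | cu
        · rcases cv with cv | cv
          · rcases F.ancChain u v w cu cv with h' | h'
            · exact absurd h' h1
            · exact absurd h' h2
          · exact absurd (F.trans u w v cu cv) h1
        · rcases cv with cv | cv
          · exact absurd (F.trans v w u cv cu) h2
          · exact cu
    have hu_notmem : u ∉ G.neighborSet u ∩ G.neighborSet v := by
      rintro ⟨h', -⟩
      exact G.irrefl h'
    have hcard : k + 1 ≤ {x | F.anc x u}.ncard := by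
      have h1' : (insert u (G.neighborSet u ∩ G.neighborSet v)).ncard =
          (G.neighborSet u ∩ G.neighborSet v).ncard + 1 :=
        Set.ncard_insert_of_notMem hu_notmem (Set.toFinite _)
      have h2' := Set.ncard_le_ncard hsub (Set.toFinite _)
      omega
    have hdepth : {x | F.anc x u}.ncard ≤ F.depth := by
      apply le_ciSup (f := fun w => Set.ncard {x | F.anc x w})
        (c := u)
      refine ⟨Fintype.card V, ?_⟩
      rintro _ ⟨w, rfl⟩
      calc {x | F.anc x w}.ncard ≤ (Set.univ : Set V).ncard :=
            Set.ncard_le_ncard (Set.subset_univ _) Set.finite_univ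
        _ = Fintype.card V := by simp [Set.ncard_univ]
    omega
  -- F is also a forest of G'
  have hle : treedepth G' ≤ treedepth G := by
    refine Nat.sInf_le ⟨⟨F.anc, F.refl, F.antisymm, F.trans, F.ancChain, ?_⟩, hF⟩
    intro a b hab
    rw [hG', SimpleGraph.sup_adj] at hab
    rcases hab with hab | hab
    · exact F.adjComparable a b hab
    · rw [SimpleGraph.fromEdgeSet_adj] at hab
      obtain ⟨hs, -⟩ := hab
      simp only [Set.mem_singleton_iff, Sym2.eq_iff] at hs
      rcases hs with ⟨rfl, rfl⟩ | ⟨rfl, rfl⟩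
      · exact hcomp
      · exact hcomp.symm
  omega

end PACE
end

section
/- Treedepth can be characterized via vertex rankings: td(G) equals the minimum k for which there is a ranking c : V(G) → {1,…,k} such that for any two distinct vertices u, v with c(u) = c(v), every u–v path contains a vertex w with c(w) > c(u). -/
namespace PACE

open SimpleGraph

variable {V : Type*}

lemma walk_anc_s18 {G : SimpleGraph V} (F : TDForest G) : ∀ {u v : V} (p : G.Walk u v),
    ∃ w ∈ p.support, ∀ x ∈ p.support, F.anc w x := by
  intro u v p
  induction p with
  | nil => exact ⟨_, Walk.start_mem_support _, fun x hx => by simp at hx; subst hx; exact F.refl _⟩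
  | @cons u u' v h q ih =>
    obtain ⟨w', hw', hall⟩ := ih
    have hwu' : F.anc w' u' := hall u' q.start_mem_support
    rcases F.adjComparable u u' h with hc | hc
    · rcases F.ancChain u w' u' hc hwu' with h1 | h2
      · refine ⟨u, by simp, ?_⟩
        intro x hx
        rw [Walk.support_cons, List.mem_cons] at hx
        rcases hx with rfl | hx
        · exact F.refl _
        · exact F.trans u w' x h1 (hall x hx)
      · exact ⟨w', by simp [hw'], by
          intro x hx
          rw [Walk.support_cons, List.mem_cons] at hx
          rcases hx with rfl | hx
          · exact h2
          · exact hall x hx⟩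
    · exact ⟨w', by simp [hw'], by
        intro x hx
        rw [Walk.support_cons, List.mem_cons] at hx
        rcases hx with rfl | hx
        · exact F.trans w' u' x hwu' hc
        · exact hall x hx⟩


theorem stmt18 {V : Type*} [Fintype V] (G : SimpleGraph V) :
    treedepth G =
      sInf {k : ℕ | ∃ c : V → ℕ, (∀ v : V, c v ∈ Set.Icc 1 k) ∧
        ∀ u v : V, u ≠ v → c u = c v →
          ∀ p : G.Walk u v, ∃ w ∈ p.support, c u < c w} := by
  unfold treedepth
  congr 1
  ext k
  constructor
  · -- forest → ranking
    rintro ⟨F, hF⟩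
    set n : V → ℕ := fun v => Set.ncard {u | F.anc u v} with hn
    have hn1 : ∀ v, 1 ≤ n v := fun v =>
      (Set.ncard_pos (Set.toFinite _)).2 ⟨v, F.refl v⟩
    have hnk : ∀ v, n v ≤ k := fun v =>
      le_trans (le_ciSup (Set.finite_range _).bddAbove v) hF
    have hstrict : ∀ a b : V, F.anc a b → a ≠ b → n a < n b := by
      intro a b hab hne
      refine Set.ncard_lt_ncard ?_ (Set.toFinite _)
      constructor
      · exact fun x hx => F.trans x a b hx hab
      · intro h
        exact hne (F.antisymm a b hab (h (F.refl b)))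
    refine ⟨fun v => k + 1 - n v, fun v => by
      simp only [Set.mem_Icc]; have := hnk v; have := hn1 v; omega, ?_⟩
    intro u v hne hcv p
    have hcv' : k + 1 - n u = k + 1 - n v := hcv
    have hnuv : n u = n v := by
      have h1 := hn1 u; have h2 := hn1 v; have h3 := hnk u; have h4 := hnk v
      omega
    obtain ⟨w, hw, hall⟩ := walk_anc_s18 F p
    have hwu : F.anc w u := hall u p.start_mem_support
    have hwv : F.anc w v := hall v p.end_mem_support
    by_cases hwu' : w = u
    · subst hwu'
      exact absurd hnuv (Nat.ne_of_lt (hstrict w v hwv hne))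
    · have := hstrict w u hwu hwu'
      have h1 := hn1 w; have h3 := hnk u
      refine ⟨w, hw, ?_⟩
      show k + 1 - n u < k + 1 - n w
      omega
  · -- ranking → forest
    rintro ⟨c, hc, hrank⟩
    set anc : V → V → Prop := fun u v => ∃ p : G.Walk u v, ∀ w ∈ p.support, c w ≤ c u with hanc
    have hanti : ∀ u v, anc u v → c u = c v → u = v := by
      intro u v ⟨p, hp⟩ hcv
      by_contra hne
      obtain ⟨w, hw, hlt⟩ := hrank u v hne hcv p
      exact absurd (hp w hw) (by omega)
    have hle : ∀ u v, anc u v → c v ≤ c u := fun u v ⟨p, hp⟩ => hp v p.end_mem_support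
    refine ⟨⟨anc, ?_, ?_, ?_, ?_, ?_⟩, ?_⟩
    · exact fun v => ⟨Walk.nil, by simp⟩
    · intro u v h1 h2
      exact hanti u v h1 (le_antisymm (hle v u h2) (hle u v h1))
    · rintro u v w ⟨p, hp⟩ ⟨q, hq⟩
      have hvu : c v ≤ c u := hp v p.end_mem_support
      refine ⟨p.append q, ?_⟩
      intro x hx
      rw [Walk.mem_support_append_iff] at hx
      rcases hx with hx | hx
      · exact hp x hx
      · exact le_trans (hq x hx) hvu
    · rintro u w v ⟨p, hp⟩ ⟨q, hq⟩
      rcases le_total (c w) (c u) with hcc | hcc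
      · refine Or.inl ⟨p.append q.reverse, ?_⟩
        intro x hx
        rw [Walk.mem_support_append_iff] at hx
        rcases hx with hx | hx
        · exact hp x hx
        · rw [Walk.support_reverse, List.mem_reverse] at hx
          exact le_trans (hq x hx) hcc
      · refine Or.inr ⟨q.append p.reverse, ?_⟩
        intro x hx
        rw [Walk.mem_support_append_iff] at hx
        rcases hx with hx | hx
        · exact hq x hx
        · rw [Walk.support_reverse, List.mem_reverse] at hx
          exact le_trans (hp x hx) hcc
    · intro u v hadj
      rcases le_total (c v) (c u) with hcc | hcc
      · refine Or.inl ⟨Walk.cons hadj Walk.nil, ?_⟩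
        intro x hx
        simp at hx
        rcases hx with rfl | rfl <;> omega
      · refine Or.inr ⟨Walk.cons hadj.symm Walk.nil, ?_⟩
        intro x hx
        simp at hx
        rcases hx with rfl | rfl <;> omega
    · show (⨆ v, Set.ncard {u | anc u v}) ≤ k
      cases isEmpty_or_nonempty V with
      | inl h => simp [ciSup_of_empty]
      | inr h =>
        refine ciSup_le fun v => ?_
        have hinj : Set.InjOn c {u | anc u v} := by
          intro a ha b hb hab
          rcases (by
            rcases ha with ⟨p, hp⟩
            rcases hb with ⟨q, hq⟩
            rcases le_total (c b) (c a) with hcc | hcc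
            · exact Or.inl ⟨p.append q.reverse, by
                intro x hx
                rw [Walk.mem_support_append_iff] at hx
                rcases hx with hx | hx
                · exact hp x hx
                · rw [Walk.support_reverse, List.mem_reverse] at hx
                  exact le_trans (hq x hx) hcc⟩
            · exact Or.inr ⟨q.append p.reverse, by
                intro x hx
                rw [Walk.mem_support_append_iff] at hx
                rcases hx with hx | hx
                · exact hq x hx
                · rw [Walk.support_reverse, List.mem_reverse] at hx
                  exact le_trans (hp x hx) hcc⟩ : anc a b ∨ anc b a) with h1 | h1
          · exact hanti a b h1 hab
          · exact (hanti b a h1 hab.symm).symm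
        calc Set.ncard {u | anc u v} = Set.ncard (c '' {u | anc u v}) :=
              (Set.ncard_image_of_injOn hinj).symm
          _ ≤ Set.ncard (Set.Icc 1 k) :=
              Set.ncard_le_ncard (by rintro _ ⟨x, _, rfl⟩; exact hc x) (Set.finite_Icc _ _)
          _ ≤ k := by
              rw [Set.ncard_eq_toFinset_card', Set.toFinset_Icc, Nat.card_Icc]; omega

end PACE
end
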